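/- For every δ ∈ [0,1) and every ξ ∈ Δ(K), the Bellman supremum is attained by a split supported on at most k beliefs: there exist weights α₁, …, α_k ≥ 0 with Σ_{i=1}^{k} α_i = 1 and beliefs ξ₁, …, ξ_k ∈ Δ(K) with Σ_{i=1}^{k} α_i ξ_i = ξ such that v_δ(ξ) = Σ_{i=1}^{k} α_i·[(1−δ)·u(ξ_i) + δ·v_δ(ξ_i M)]. -/

import Mathlib

open scoped BigOperators

noncomputable section

/-- A row-stochastic matrix: nonnegative entries, rows summing to 1. -/
def IsStochastic {K : Type*} [Fintype K] (M : Matrix K K ℝ) : Prop :=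
  (∀ i j, 0 ≤ M i j) ∧ ∀ i, ∑ j, M i j = 1

/-- A split of `ξ`: a countable family of weights `α` and beliefs `ξs` with
`α s ≥ 0`, `ξs s ∈ Δ(K)`, `∑ α = 1` and `∑ α_s ξ_s = ξ`. -/
def IsSplit {K : Type*} [Fintype K] (ξ : K → ℝ) (α : ℕ → ℝ) (ξs : ℕ → K → ℝ) : Prop :=
  (∀ s, 0 ≤ α s) ∧ (∀ s, ξs s ∈ stdSimplex ℝ K) ∧ (∑' s, α s) = 1 ∧
    ∀ ℓ : K, (∑' s, α s * ξs s ℓ) = ξ ℓ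

/-- The one-stage payoff of a split in the δ-discounted Bellman equation. -/
def splitPayoff {K : Type*} [Fintype K] (M : Matrix K K ℝ) (u : (K → ℝ) → ℝ) (δ : ℝ)
    (w : (K → ℝ) → ℝ) (α : ℕ → ℝ) (ξs : ℕ → K → ℝ) : ℝ :=
  ∑' s, α s * ((1 - δ) * u (ξs s) + δ * w (Matrix.vecMul (ξs s) M))

/-- `v` is the family of δ-discounted values of the Markovian persuasion game:
for each `δ ∈ [0,1)`, `v δ` is bounded between `0` and `C = ‖u‖∞` on `Δ(K)` and
satisfies the Bellman equation there. -/
def IsValueFamily {K : Type*} [Fintype K] (M : Matrix K K ℝ) (u : (K → ℝ) → ℝ) (C : ℝ)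
    (v : ℝ → (K → ℝ) → ℝ) : Prop :=
  ∀ δ ∈ Set.Ico (0 : ℝ) 1,
    (∀ ξ ∈ stdSimplex ℝ K, 0 ≤ v δ ξ ∧ v δ ξ ≤ C) ∧
    ∀ ξ ∈ stdSimplex ℝ K,
      v δ ξ = sSup { r : ℝ | ∃ α ξs, IsSplit ξ α ξs ∧ r = splitPayoff M u δ (v δ) α ξs }

/-!
Write `g` for the one-stage payoff `x ↦ (1 - δ) u x + δ v (x M)`, so that the Bellman equation
reads `v = splitSup g` on `Δ(K)`. For any bounded nonnegative `g` that is upper semicontinuous on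
`Δ(K)`, the supremum over countable splits is a maximum over splits into `k` beliefs: truncating a
countable split loses arbitrarily little; a Carathéodory argument (more than `k` beliefs are
linearly dependent, and the weights can be shifted along the dependence without lowering the
payoff) reduces a finite split to `k` atoms; and the `k`-atom splits of `ξ` form a compact set on
which the payoff is upper semicontinuous. The same compactness makes `splitSup g` upper
semicontinuous. It remains to see that `v` is upper semicontinuous, so that `g` is: value
iteration from `0` preserves upper semicontinuity and converges uniformly to `v`, because the
Bellman operator is a `δ`-contraction.
-/

open Filter Topology Set Function

section Semicontinuity

variable {X : Type*} [TopologicalSpace X] {s : Set X}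

lemma UpperSemicontinuousOn.comp_continuousOn {Y β : Type*} [TopologicalSpace Y] [Preorder β]
    {t : Set Y} {g : Y → β} {f : X → Y} (hg : UpperSemicontinuousOn g t) (hf : ContinuousOn f s)
    (hst : MapsTo f s t) : UpperSemicontinuousOn (g ∘ f) s := fun x hx y hy =>
  ((hf x hx).tendsto_nhdsWithin hst).eventually (hg (f x) (hst hx) y hy)

lemma ContinuousOn.mul_upperSemicontinuousOn {f q : X → ℝ} (hf : ContinuousOn f s)
    (hf0 : ∀ x ∈ s, 0 ≤ f x) (hq : UpperSemicontinuousOn q s) :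
    UpperSemicontinuousOn (fun x => f x * q x) s := by
  intro x hx y hy
  have hfx := hf0 x hx
  set ε := (y - f x * q x) / (f x + 1)
  have hε : 0 < ε := div_pos (by linarith) (by linarith)
  have hεy : f x * (q x + ε) < y := by
    have : f x * ε < y - f x * q x := by
      rw [← mul_div_assoc, div_lt_iff₀ (by linarith)]
      nlinarith
    linarith
  have hnear : ∀ᶠ z in 𝓝[s] x, f z * (q x + ε) < y :=
    ((hf x hx).mul continuousWithinAt_const).eventually (eventually_lt_nhds hεy)
  filter_upwards [hnear, hq x hx _ (lt_add_of_pos_right _ hε), self_mem_nhdsWithin]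
    with z hz hqz hzs
  nlinarith [hf0 z hzs]

lemma TendstoUniformlyOn.upperSemicontinuousOn {ι : Type*} {l : Filter ι} [l.NeBot]
    {F : ι → X → ℝ} {f : X → ℝ} (hF : TendstoUniformlyOn F f l s)
    (hFu : ∀ i, UpperSemicontinuousOn (F i) s) : UpperSemicontinuousOn f s := by
  intro x hx y hy
  have hε : 0 < (y - f x) / 3 := by linarith
  obtain ⟨i, hi⟩ := (Metric.tendstoUniformlyOn_iff.1 hF _ hε).exists
  have hix := hi x hx
  filter_upwards [hFu i x hx (F i x + (y - f x) / 3) (by linarith), self_mem_nhdsWithin]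
    with z hz hzs
  have hiz := hi z hzs
  rw [Real.dist_eq, abs_lt] at hix hiz
  linarith

end Semicontinuity

section Splits

variable {K ι κ : Type*} [Fintype ι] {g : (K → ℝ) → ℝ} {B : ℝ} {ξ : K → ℝ}
  {p : (ι → ℝ) × (ι → K → ℝ)}

def finiteSplitValue (g : (K → ℝ) → ℝ) (p : (ι → ℝ) × (ι → K → ℝ)) : ℝ :=
  ∑ i, p.1 i * g (p.2 i)

lemma tsum_extend_mul {X : Type*} {j : ι → κ} (hj : Injective j) (a : ι → ℝ) (f : ι → X)
    (x₀ : X) (h : X → ℝ) :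
    ∑' k, extend j a 0 k * h (extend j f (fun _ => x₀) k) = ∑ i, a i * h (f i) := by
  have hext : (fun k => extend j a 0 k * h (extend j f (fun _ => x₀) k))
      = extend j (fun i => a i * h (f i)) 0 := by
    funext k
    by_cases hk : ∃ i, j i = k
    · obtain ⟨i, rfl⟩ := hk
      simp only [hj.extend_apply]
    · simp only [extend_apply' _ _ _ hk, Pi.zero_apply, zero_mul]
  rw [hext, tsum_extend_zero hj, tsum_fintype]

def finiteSplitExtend (j : ι → κ) (ξ : K → ℝ) (p : (ι → ℝ) × (ι → K → ℝ)) :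
    (κ → ℝ) × (κ → K → ℝ) :=
  (extend j p.1 0, extend j p.2 fun _ => ξ)

lemma finiteSplitValue_extend [Fintype κ] {j : ι → κ} (hj : Injective j) :
    finiteSplitValue g (finiteSplitExtend j ξ p) = finiteSplitValue g p := by
  simpa [finiteSplitValue, finiteSplitExtend, tsum_fintype] using tsum_extend_mul hj p.1 p.2 ξ g

variable [Fintype K]

def finiteSplits (ι : Type*) [Fintype ι] (ξ : K → ℝ) : Set ((ι → ℝ) × (ι → K → ℝ)) :=
  {p | p.1 ∈ stdSimplex ℝ ι ∧ (∀ i, p.2 i ∈ stdSimplex ℝ K) ∧ ∑ i, p.1 i • p.2 i = ξ}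

def splitValues (g : (K → ℝ) → ℝ) (ξ : K → ℝ) : Set ℝ :=
  {r | ∃ α ξs, IsSplit ξ α ξs ∧ r = ∑' s, α s * g (ξs s)}

def splitSup (g : (K → ℝ) → ℝ) (ξ : K → ℝ) : ℝ :=
  sSup (splitValues g ξ)

lemma mem_stdSimplex_of_mem_finiteSplits (hp : p ∈ finiteSplits ι ξ) : ξ ∈ stdSimplex ℝ K :=
  hp.2.2 ▸ (convex_stdSimplex ℝ K).sum_mem (fun i _ => hp.1.1 i) hp.1.2 fun i _ => hp.2.1 i

lemma self_mem_finiteSplits (hξ : ξ ∈ stdSimplex ℝ K) : (ξ, fun _ => ξ) ∈ finiteSplits K ξ :=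
  ⟨hξ, fun _ => hξ, by rw [← Finset.sum_smul, hξ.2, one_smul]⟩

lemma extend_mem_finiteSplits [Fintype κ] {j : ι → κ} (hj : Injective j)
    (hp : p ∈ finiteSplits ι ξ) :
    finiteSplitExtend j ξ p ∈ finiteSplits κ ξ := by
  have hξ := mem_stdSimplex_of_mem_finiteSplits hp
  refine ⟨⟨(extend_nonneg (fun i => hp.1.1 i) le_rfl : 0 ≤ extend j p.1 0), ?_⟩, fun k => ?_, ?_⟩
  · simpa [finiteSplitExtend, tsum_fintype, hp.1.2] using tsum_extend_mul hj p.1 p.2 ξ fun _ => 1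
  · by_cases hk : ∃ i, j i = k
    · obtain ⟨i, rfl⟩ := hk
      simpa [finiteSplitExtend, hj.extend_apply] using hp.2.1 i
    · simpa [finiteSplitExtend, extend_apply' _ _ _ hk] using hξ
  · funext ℓ
    have := tsum_extend_mul hj p.1 p.2 ξ fun x => x ℓ
    rw [tsum_fintype] at this
    simpa [finiteSplitExtend, Finset.sum_apply, this] using congrFun hp.2.2 ℓ

lemma isSplit_extend {j : ι → ℕ} (hj : Injective j) (hp : p ∈ finiteSplits ι ξ) :
    IsSplit ξ (extend j p.1 0) (extend j p.2 fun _ => ξ) := by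
  have hξ := mem_stdSimplex_of_mem_finiteSplits hp
  refine ⟨(extend_nonneg (fun i => hp.1.1 i) le_rfl : 0 ≤ extend j p.1 0), fun s => ?_, ?_,
    fun ℓ => ?_⟩
  · by_cases hs : ∃ i, j i = s
    · obtain ⟨i, rfl⟩ := hs
      simpa [hj.extend_apply] using hp.2.1 i
    · simpa [extend_apply' _ _ _ hs] using hξ
  · simpa [hp.1.2] using tsum_extend_mul hj p.1 p.2 ξ fun _ => 1
  · rw [tsum_extend_mul hj p.1 p.2 ξ fun x => x ℓ]
    simpa [Finset.sum_apply] using congrFun hp.2.2 ℓ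

lemma finiteSplitValue_mem_splitValues (hp : p ∈ finiteSplits ι ξ) :
    finiteSplitValue g p ∈ splitValues g ξ := by
  obtain ⟨j, hj⟩ := exists_injective_nat ι
  exact ⟨_, _, isSplit_extend hj hp, (tsum_extend_mul hj p.1 p.2 ξ g).symm⟩

lemma splitValues_nonempty (hξ : ξ ∈ stdSimplex ℝ K) : (splitValues g ξ).Nonempty :=
  ⟨_, finiteSplitValue_mem_splitValues (self_mem_finiteSplits hξ)⟩

namespace IsSplit

variable {α : ℕ → ℝ} {ξs : ℕ → K → ℝ}

lemma summable (h : IsSplit ξ α ξs) : Summable α := by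
  by_contra hs
  have h1 := h.2.2.1
  rw [tsum_eq_zero_of_not_summable hs] at h1
  exact zero_ne_one h1

lemma summable_mul (h : IsSplit ξ α ξs) {f : ℕ → ℝ} (hf0 : ∀ s, 0 ≤ f s) (hfB : ∀ s, f s ≤ B) :
    Summable fun s => α s * f s :=
  .of_nonneg_of_le (fun s => mul_nonneg (h.1 s) (hf0 s))
    (fun s => mul_le_mul_of_nonneg_left (hfB s) (h.1 s)) (h.summable.mul_right B)

lemma tsum_mul_le (h : IsSplit ξ α ξs) {f : ℕ → ℝ} (hf0 : ∀ s, 0 ≤ f s) (hfB : ∀ s, f s ≤ B) :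
    ∑' s, α s * f s ≤ B :=
  calc ∑' s, α s * f s ≤ ∑' s, α s * B :=
        (h.summable_mul hf0 hfB).tsum_le_tsum (fun s => mul_le_mul_of_nonneg_left (hfB s) (h.1 s))
          (h.summable.mul_right B)
    _ = B := by rw [tsum_mul_right, h.2.2.1, one_mul]

end IsSplit

lemma mem_upperBounds_splitValues (hg0 : ∀ x ∈ stdSimplex ℝ K, 0 ≤ g x)
    (hgB : ∀ x ∈ stdSimplex ℝ K, g x ≤ B) : B ∈ upperBounds (splitValues g ξ) := by
  rintro _ ⟨α, ξs, h, rfl⟩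
  exact h.tsum_mul_le (fun s => hg0 _ (h.2.1 s)) fun s => hgB _ (h.2.1 s)

lemma splitValues_bddAbove (hg0 : ∀ x ∈ stdSimplex ℝ K, 0 ≤ g x)
    (hgB : ∀ x ∈ stdSimplex ℝ K, g x ≤ B) : BddAbove (splitValues g ξ) :=
  ⟨B, mem_upperBounds_splitValues hg0 hgB⟩

end Splits

section Truncation

variable {K : Type*} [Fintype K] {g : (K → ℝ) → ℝ} {B : ℝ} {ξ : K → ℝ}

lemma exists_tsum_mul_eq_mul_of_mem_stdSimplex {a : ℕ → ℝ} {x : ℕ → K → ℝ} (ha0 : ∀ s, 0 ≤ a s)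
    (ha : Summable a) (hx : ∀ s, x s ∈ stdSimplex ℝ K) :
    ∃ y ∈ stdSimplex ℝ K, ∀ ℓ, ∑' s, a s * x s ℓ = (∑' s, a s) * y ℓ := by
  have hle : ∀ s ℓ, a s * x s ℓ ≤ a s := fun s ℓ =>
    mul_le_of_le_one_right (ha0 s) (stdSimplex.le_one ⟨_, hx s⟩ ℓ)
  have hsum : ∀ ℓ, Summable fun s => a s * x s ℓ := fun ℓ =>
    .of_nonneg_of_le (fun s => mul_nonneg (ha0 s) ((hx s).1 ℓ)) (fun s => hle s ℓ) ha
  have hnonneg : ∀ ℓ, 0 ≤ ∑' s, a s * x s ℓ := fun ℓ =>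
    tsum_nonneg fun s => mul_nonneg (ha0 s) ((hx s).1 ℓ)
  by_cases hA : ∑' s, a s = 0
  · refine ⟨x 0, hx 0, fun ℓ => ?_⟩
    rw [hA, zero_mul]
    exact le_antisymm (hA ▸ (hsum ℓ).tsum_le_tsum (fun s => hle s ℓ) ha) (hnonneg ℓ)
  · refine ⟨fun ℓ => (∑' s, a s * x s ℓ) / ∑' s, a s,
      ⟨fun ℓ => div_nonneg (hnonneg ℓ) (tsum_nonneg ha0), ?_⟩, fun ℓ => by field_simp⟩
    rw [← Finset.sum_div, div_eq_one_iff_eq hA, ← Summable.tsum_finsetSum fun ℓ _ => hsum ℓ]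
    congr 1 with s
    rw [← Finset.mul_sum, (hx s).2, mul_one]

/-- Keep the first `N` atoms and merge the tail into a single belief. -/
lemma IsSplit.exists_finiteSplit {α : ℕ → ℝ} {ξs : ℕ → K → ℝ} (h : IsSplit ξ α ξs) (N : ℕ) :
    ∃ p ∈ finiteSplits (Fin (N + 1)) ξ, ∀ g : (K → ℝ) → ℝ, (∀ x ∈ stdSimplex ℝ K, 0 ≤ g x) →
      ∑ s ∈ Finset.range N, α s * g (ξs s) ≤ finiteSplitValue g p := by
  obtain ⟨y, hy, hmix⟩ := exists_tsum_mul_eq_mul_of_mem_stdSimplex (fun s => h.1 (s + N))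
    ((summable_nat_add_iff N).2 h.summable) fun s => h.2.1 (s + N)
  set β := ∑' s, α (s + N)
  have hβ : ∑ s ∈ Finset.range N, α s + β = 1 := h.2.2.1 ▸ h.summable.sum_add_tsum_nat_add N
  have hβ0 : 0 ≤ β := tsum_nonneg fun s => h.1 (s + N)
  refine ⟨(Fin.snoc (fun i : Fin N => α i) β, Fin.snoc (fun i : Fin N => ξs i) y),
    ⟨⟨fun i => ?_, ?_⟩, fun i => ?_, ?_⟩, fun g hg0 => ?_⟩
  · induction i using Fin.lastCases <;> simp [h.1, hβ0]
  · simpa [Fin.sum_univ_castSucc, Fin.sum_univ_eq_sum_range (fun s => α s) N] using hβ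
  · induction i using Fin.lastCases <;> simp [h.2.1, hy]
  · funext ℓ
    have htail := (h.summable_mul (fun s => (h.2.1 s).1 ℓ)
      fun s => stdSimplex.le_one ⟨_, h.2.1 s⟩ ℓ).sum_add_tsum_nat_add N
    rw [h.2.2.2 ℓ, hmix ℓ] at htail
    simpa [Fin.sum_univ_castSucc, Finset.sum_apply,
      Fin.sum_univ_eq_sum_range (fun s => α s * ξs s ℓ) N] using htail
  · simpa [finiteSplitValue, Fin.sum_univ_castSucc,
      Fin.sum_univ_eq_sum_range (fun s => α s * g (ξs s)) N] using mul_nonneg hβ0 (hg0 y hy)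

lemma IsSplit.exists_finiteSplitValue_gt (hg0 : ∀ x ∈ stdSimplex ℝ K, 0 ≤ g x)
    (hgB : ∀ x ∈ stdSimplex ℝ K, g x ≤ B) {α : ℕ → ℝ} {ξs : ℕ → K → ℝ} (h : IsSplit ξ α ξs)
    {c : ℝ} (hc : c < ∑' s, α s * g (ξs s)) :
    ∃ N, ∃ p ∈ finiteSplits (Fin (N + 1)) ξ, c < finiteSplitValue g p := by
  have hs := h.summable_mul (fun s => hg0 _ (h.2.1 s)) fun s => hgB _ (h.2.1 s)
  obtain ⟨N, hN⟩ := (hs.hasSum.tendsto_sum_nat.eventually (eventually_gt_nhds hc)).exists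
  obtain ⟨p, hp, hpv⟩ := h.exists_finiteSplit N
  exact ⟨N, p, hp, hN.trans_le (hpv g hg0)⟩

end Truncation

section Reduction

variable {K ι : Type*} [Fintype K] [Fintype ι] {g : (K → ℝ) → ℝ} {ξ : K → ℝ}

lemma exists_neg_of_sum_eq_zero {d : ι → ℝ} (hd : d ≠ 0) (hsum : ∑ i, d i = 0) :
    ∃ i, d i < 0 := by
  by_contra! hpos
  exact hd (funext fun i => (Finset.sum_eq_zero_iff_of_nonneg fun j _ => hpos j).1 hsum i
    (Finset.mem_univ i))

/-- The coefficients sum to zero because every belief has total mass one. -/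
lemma exists_null_combination (hcard : Fintype.card K < Fintype.card ι) {x : ι → K → ℝ}
    (hx : ∀ i, x i ∈ stdSimplex ℝ K) :
    ∃ d : ι → ℝ, d ≠ 0 ∧ ∑ i, d i • x i = 0 ∧ ∑ i, d i = 0 := by
  have hdep : ¬ LinearIndependent ℝ x := fun h => by
    have := h.fintype_card_le_finrank
    rw [Module.finrank_fintype_fun_eq_card] at this
    omega
  obtain ⟨d, hd, i, hi⟩ := Fintype.not_linearIndependent_iff.1 hdep
  refine ⟨d, fun h => hi (congrFun h i), hd, ?_⟩
  calc ∑ i, d i = ∑ ℓ, (∑ i, d i • x i) ℓ := by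
        simp only [Finset.sum_apply, Pi.smul_apply, smul_eq_mul]
        rw [Finset.sum_comm]
        exact Finset.sum_congr rfl fun i _ => by rw [← Finset.mul_sum, (hx i).2, mul_one]
    _ = 0 := by rw [hd]; simp

lemma exists_nonneg_add_mul_eq_zero {a d : ι → ℝ} (ha : ∀ i, 0 ≤ a i) (hd : ∃ i, d i < 0) :
    ∃ t : ℝ, 0 ≤ t ∧ (∀ i, 0 ≤ a i + t * d i) ∧ ∃ i, a i + t * d i = 0 := by
  classical
  obtain ⟨i₀, hi₀, hmin⟩ := (Finset.univ.filter fun i => d i < 0).exists_min_image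
    (fun i => a i / -d i) (by simpa [Finset.filter_nonempty_iff] using hd)
  have hd₀ : d i₀ < 0 := (Finset.mem_filter.1 hi₀).2
  refine ⟨a i₀ / -d i₀, div_nonneg (ha i₀) (by linarith), fun i => ?_, i₀, ?_⟩
  · rcases lt_or_ge (d i) 0 with hdi | hdi
    · have := hmin i (Finset.mem_filter.2 ⟨Finset.mem_univ i, hdi⟩)
      rw [le_div_iff₀ (by linarith)] at this
      nlinarith
    · exact add_nonneg (ha i) (mul_nonneg (div_nonneg (ha i₀) (by linarith)) hdi)
  · rw [div_neg, neg_mul, div_mul_cancel₀ _ hd₀.ne, add_neg_cancel]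

/-- Carathéodory step: move the weights along a null combination of the beliefs, in the direction
that does not decrease the value, until one of them vanishes. -/
lemma exists_finiteSplit_weight_eq_zero (hcard : Fintype.card K < Fintype.card ι)
    {p : (ι → ℝ) × (ι → K → ℝ)} (hp : p ∈ finiteSplits ι ξ) :
    ∃ q ∈ finiteSplits ι ξ, finiteSplitValue g p ≤ finiteSplitValue g q ∧ ∃ i, q.1 i = 0 := by
  obtain ⟨c, hc, hcx, hcsum⟩ := exists_null_combination hcard hp.2.1
  obtain ⟨d, hd, hdx, hdsum, hdg⟩ : ∃ d : ι → ℝ, d ≠ 0 ∧ ∑ i, d i • p.2 i = 0 ∧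
      ∑ i, d i = 0 ∧ 0 ≤ ∑ i, d i * g (p.2 i) := by
    rcases le_total 0 (∑ i, c i * g (p.2 i)) with hcg | hcg
    · exact ⟨c, hc, hcx, hcsum, hcg⟩
    · refine ⟨-c, neg_ne_zero.2 hc, ?_, ?_, ?_⟩ <;>
        simp [Finset.sum_neg_distrib, neg_smul, hcx, hcsum, hcg]
  obtain ⟨t, ht0, ht, i, hi⟩ :=
    exists_nonneg_add_mul_eq_zero hp.1.1 (exists_neg_of_sum_eq_zero hd hdsum)
  refine ⟨(fun i => p.1 i + t * d i, p.2), ⟨⟨ht, ?_⟩, hp.2.1, ?_⟩, ?_, i, hi⟩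
  · simp [Finset.sum_add_distrib, ← Finset.mul_sum, hdsum, hp.1.2]
  · simp [add_smul, mul_smul, Finset.sum_add_distrib, ← Finset.smul_sum, hdx, hp.2.2]
  · simp only [finiteSplitValue, add_mul, mul_assoc, Finset.sum_add_distrib, ← Finset.mul_sum]
    nlinarith [mul_nonneg ht0 hdg]

lemma succAbove_mem_finiteSplits {n : ℕ} {p : (Fin (n + 1) → ℝ) × (Fin (n + 1) → K → ℝ)}
    (hp : p ∈ finiteSplits (Fin (n + 1)) ξ) {i : Fin (n + 1)} (hi : p.1 i = 0) :
    (p.1 ∘ i.succAbove, p.2 ∘ i.succAbove) ∈ finiteSplits (Fin n) ξ ∧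
      finiteSplitValue g (p.1 ∘ i.succAbove, p.2 ∘ i.succAbove) = finiteSplitValue g p := by
  obtain ⟨⟨hp0, hp1⟩, hpx, hpξ⟩ := hp
  rw [Fin.sum_univ_succAbove _ i, hi, zero_add] at hp1
  rw [Fin.sum_univ_succAbove _ i, hi, zero_smul, zero_add] at hpξ
  refine ⟨⟨⟨fun j => hp0 _, hp1⟩, fun j => hpx _, hpξ⟩, ?_⟩
  rw [finiteSplitValue, finiteSplitValue, Fin.sum_univ_succAbove _ i, hi, zero_mul, zero_add]
  rfl

lemma exists_mem_finiteSplits_finiteSplitValue_ge_of_card_le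
    (hcard : Fintype.card ι ≤ Fintype.card K) {p : (ι → ℝ) × (ι → K → ℝ)}
    (hp : p ∈ finiteSplits ι ξ) :
    ∃ q ∈ finiteSplits K ξ, finiteSplitValue g p ≤ finiteSplitValue g q :=
  let ⟨j⟩ := Function.Embedding.nonempty_of_card_le hcard
  ⟨_, extend_mem_finiteSplits j.injective hp, (finiteSplitValue_extend j.injective).ge⟩

lemma exists_mem_finiteSplits_finiteSplitValue_ge :
    ∀ {n : ℕ} {p : (Fin n → ℝ) × (Fin n → K → ℝ)}, p ∈ finiteSplits (Fin n) ξ →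
      ∃ q ∈ finiteSplits K ξ, finiteSplitValue g p ≤ finiteSplitValue g q
  | 0, _, hp => exists_mem_finiteSplits_finiteSplitValue_ge_of_card_le (by simp) hp
  | n + 1, p, hp => by
    by_cases hcard : n + 1 ≤ Fintype.card K
    · exact exists_mem_finiteSplits_finiteSplitValue_ge_of_card_le (by simpa using hcard) hp
    obtain ⟨q, hq, hpq, i, hi⟩ := exists_finiteSplit_weight_eq_zero (by simpa using hcard) hp
    obtain ⟨hq', hqv⟩ := succAbove_mem_finiteSplits hq hi
    obtain ⟨r, hr, hqr⟩ := exists_mem_finiteSplits_finiteSplitValue_ge hq'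
    exact ⟨r, hr, hpq.trans (hqv ▸ hqr)⟩

end Reduction

section Attainment

variable {K ι : Type*} [Fintype K] [Fintype ι] {g : (K → ℝ) → ℝ} {B : ℝ} {ξ : K → ℝ}

lemma isClosed_setOf_mem_finiteSplits :
    IsClosed {q : (K → ℝ) × (ι → ℝ) × (ι → K → ℝ) | q.2 ∈ finiteSplits ι q.1} := by
  have hweights : IsClosed {q : (K → ℝ) × (ι → ℝ) × (ι → K → ℝ) | q.2.1 ∈ stdSimplex ℝ ι} :=
    (isClosed_stdSimplex ℝ ι).preimage (by fun_prop)
  have hbeliefs : IsClosed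
      {q : (K → ℝ) × (ι → ℝ) × (ι → K → ℝ) | ∀ i, q.2.2 i ∈ stdSimplex ℝ K} := by
    simp only [ofPred_forall]
    exact isClosed_iInter fun i => (isClosed_stdSimplex ℝ K).preimage (by fun_prop)
  have hmean : IsClosed
      {q : (K → ℝ) × (ι → ℝ) × (ι → K → ℝ) | ∑ i, q.2.1 i • q.2.2 i = q.1} :=
    isClosed_eq (by fun_prop) continuous_fst
  exact hweights.inter (hbeliefs.inter hmean)

lemma setOf_mem_finiteSplits_subset :
    {q : (K → ℝ) × (ι → ℝ) × (ι → K → ℝ) | q.2 ∈ finiteSplits ι q.1} ⊆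
      stdSimplex ℝ K ×ˢ stdSimplex ℝ ι ×ˢ univ.pi fun _ => stdSimplex ℝ K :=
  fun _ hq => ⟨mem_stdSimplex_of_mem_finiteSplits hq, hq.1, fun i _ => hq.2.1 i⟩

lemma isCompact_setOf_mem_finiteSplits :
    IsCompact {q : (K → ℝ) × (ι → ℝ) × (ι → K → ℝ) | q.2 ∈ finiteSplits ι q.1} :=
  ((isCompact_stdSimplex ℝ K).prod ((isCompact_stdSimplex ℝ ι).prod
    (isCompact_univ_pi fun _ => isCompact_stdSimplex ℝ K))).of_isClosed_subset
    isClosed_setOf_mem_finiteSplits setOf_mem_finiteSplits_subset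

lemma isCompact_finiteSplits (ξ : K → ℝ) : IsCompact (finiteSplits ι ξ) :=
  ((isCompact_stdSimplex ℝ ι).prod (isCompact_univ_pi fun _ => isCompact_stdSimplex ℝ K))
    |>.of_isClosed_subset (isClosed_setOf_mem_finiteSplits.preimage (Continuous.prodMk_right ξ))
    fun _ hp => ⟨hp.1, fun i _ => hp.2.1 i⟩

lemma upperSemicontinuousOn_finiteSplitValue (hg : UpperSemicontinuousOn g (stdSimplex ℝ K)) :
    UpperSemicontinuousOn (finiteSplitValue (ι := ι) g)
      (stdSimplex ℝ ι ×ˢ univ.pi fun _ => stdSimplex ℝ K) :=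
  upperSemicontinuousOn_sum fun i _ => ContinuousOn.mul_upperSemicontinuousOn (by fun_prop)
    (fun _ hp => hp.1.1 i) (hg.comp_continuousOn (by fun_prop) fun _ hp => hp.2 i trivial)

lemma finiteSplitValue_le_splitSup (hg0 : ∀ x ∈ stdSimplex ℝ K, 0 ≤ g x)
    (hgB : ∀ x ∈ stdSimplex ℝ K, g x ≤ B) {p : (ι → ℝ) × (ι → K → ℝ)}
    (hp : p ∈ finiteSplits ι ξ) : finiteSplitValue g p ≤ splitSup g ξ :=
  le_csSup (splitValues_bddAbove hg0 hgB) (finiteSplitValue_mem_splitValues hp)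

lemma splitSup_nonneg (hg0 : ∀ x ∈ stdSimplex ℝ K, 0 ≤ g x) (hgB : ∀ x ∈ stdSimplex ℝ K, g x ≤ B)
    (hξ : ξ ∈ stdSimplex ℝ K) : 0 ≤ splitSup g ξ :=
  (Finset.sum_nonneg fun i _ => mul_nonneg (hξ.1 i) (hg0 ξ hξ)).trans
    (finiteSplitValue_le_splitSup hg0 hgB (self_mem_finiteSplits hξ))

lemma splitSup_le (hg0 : ∀ x ∈ stdSimplex ℝ K, 0 ≤ g x) (hgB : ∀ x ∈ stdSimplex ℝ K, g x ≤ B)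
    (hξ : ξ ∈ stdSimplex ℝ K) : splitSup g ξ ≤ B :=
  csSup_le (splitValues_nonempty hξ) (mem_upperBounds_splitValues hg0 hgB)

theorem exists_finiteSplitValue_eq_splitSup (hg0 : ∀ x ∈ stdSimplex ℝ K, 0 ≤ g x)
    (hgB : ∀ x ∈ stdSimplex ℝ K, g x ≤ B) (hg : UpperSemicontinuousOn g (stdSimplex ℝ K))
    (hξ : ξ ∈ stdSimplex ℝ K) :
    ∃ p ∈ finiteSplits K ξ, finiteSplitValue g p = splitSup g ξ := by
  obtain ⟨p, hp, hmax⟩ := ((upperSemicontinuousOn_finiteSplitValue hg).mono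
    fun q hq => ⟨hq.1, fun i _ => hq.2.1 i⟩).exists_isMaxOn
    ⟨_, self_mem_finiteSplits hξ⟩ (isCompact_finiteSplits ξ)
  refine ⟨p, hp, (finiteSplitValue_le_splitSup hg0 hgB hp).antisymm
    (csSup_le (splitValues_nonempty hξ) ?_)⟩
  rintro _ ⟨α, ξs, h, rfl⟩
  refine le_of_forall_lt fun c hc => ?_
  obtain ⟨N, q, hq, hcq⟩ := h.exists_finiteSplitValue_gt hg0 hgB hc
  obtain ⟨r, hr, hqr⟩ := exists_mem_finiteSplits_finiteSplitValue_ge (g := g) hq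
  exact hcq.trans_le (hqr.trans (hmax hr))

/-- The superlevel sets of `splitSup g` are projections of compact sets of splits. -/
theorem upperSemicontinuousOn_splitSup (hg0 : ∀ x ∈ stdSimplex ℝ K, 0 ≤ g x)
    (hgB : ∀ x ∈ stdSimplex ℝ K, g x ≤ B) (hg : UpperSemicontinuousOn g (stdSimplex ℝ K)) :
    UpperSemicontinuousOn (splitSup g) (stdSimplex ℝ K) := by
  rw [upperSemicontinuousOn_iff_preimage_Ici]
  intro b
  set G := {q : (K → ℝ) × (K → ℝ) × (K → K → ℝ) | q.2 ∈ finiteSplits K q.1}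
  have hG : IsCompact (G ∩ (finiteSplitValue g ∘ Prod.snd) ⁻¹' Ici b) :=
    ((upperSemicontinuousOn_finiteSplitValue hg).comp_continuousOn continuous_snd.continuousOn
      fun q hq => (setOf_mem_finiteSplits_subset hq).2).isCompact_inter_preimage_Ici
      isCompact_setOf_mem_finiteSplits b
  refine ⟨Prod.fst '' (G ∩ (finiteSplitValue g ∘ Prod.snd) ⁻¹' Ici b),
    (hG.image continuous_fst).isClosed, Set.ext fun x => ⟨?_, ?_⟩⟩
  · rintro ⟨hx, hb⟩
    obtain ⟨p, hp, hpv⟩ := exists_finiteSplitValue_eq_splitSup hg0 hgB hg hx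
    exact ⟨hx, (x, p), ⟨hp, by simpa [hpv] using hb⟩, rfl⟩
  · rintro ⟨hx, ⟨_, p⟩, ⟨hp, hb⟩, rfl⟩
    exact ⟨hx, le_trans hb (finiteSplitValue_le_splitSup hg0 hgB hp)⟩

lemma splitSup_le_splitSup_add {g₁ g₂ : (K → ℝ) → ℝ} {B₁ B₂ c : ℝ}
    (hg₁0 : ∀ x ∈ stdSimplex ℝ K, 0 ≤ g₁ x) (hg₁B : ∀ x ∈ stdSimplex ℝ K, g₁ x ≤ B₁)
    (hg₂0 : ∀ x ∈ stdSimplex ℝ K, 0 ≤ g₂ x) (hg₂B : ∀ x ∈ stdSimplex ℝ K, g₂ x ≤ B₂)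
    (h : ∀ x ∈ stdSimplex ℝ K, g₁ x ≤ g₂ x + c) (hξ : ξ ∈ stdSimplex ℝ K) :
    splitSup g₁ ξ ≤ splitSup g₂ ξ + c := by
  refine csSup_le (splitValues_nonempty hξ) ?_
  rintro _ ⟨α, ξs, hs, rfl⟩
  have hs₂ := hs.summable_mul (fun s => hg₂0 _ (hs.2.1 s)) fun s => hg₂B _ (hs.2.1 s)
  calc ∑' s, α s * g₁ (ξs s) ≤ ∑' s, (α s * g₂ (ξs s) + α s * c) :=
        (hs.summable_mul (fun s => hg₁0 _ (hs.2.1 s)) fun s => hg₁B _ (hs.2.1 s)).tsum_le_tsum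
          (fun s => by nlinarith [hs.1 s, h _ (hs.2.1 s)]) (hs₂.add (hs.summable.mul_right c))
    _ = ∑' s, α s * g₂ (ξs s) + c := by
        rw [hs₂.tsum_add (hs.summable.mul_right c), tsum_mul_right, hs.2.2.1, one_mul]
    _ ≤ splitSup g₂ ξ + c := by
        gcongr
        exact le_csSup (splitValues_bddAbove hg₂0 hg₂B) ⟨α, ξs, hs, rfl⟩

end Attainment

section Bellman

variable {K : Type*} [Fintype K] {M : Matrix K K ℝ} {u : (K → ℝ) → ℝ} {C δ : ℝ}

lemma IsStochastic.vecMul_mem_stdSimplex (hM : IsStochastic M) {x : K → ℝ}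
    (hx : x ∈ stdSimplex ℝ K) : Matrix.vecMul x M ∈ stdSimplex ℝ K := by
  classical
  have hM' : M ∈ Matrix.rowStochastic ℝ K := Matrix.mem_rowStochastic_iff_sum.2 hM
  refine ⟨Matrix.nonneg_vecMul_of_mem_rowStochastic hM' hx.1, ?_⟩
  simpa [dotProduct] using
    Matrix.vecMul_dotProduct_one_eq_one_rowStochastic hM' (by simpa [dotProduct] using hx.2)

def stagePayoff (M : Matrix K K ℝ) (u : (K → ℝ) → ℝ) (δ : ℝ) (w : (K → ℝ) → ℝ) (x : K → ℝ) :
    ℝ :=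
  (1 - δ) * u x + δ * w (Matrix.vecMul x M)

variable {w : (K → ℝ) → ℝ}

lemma stagePayoff_nonneg (hM : IsStochastic M) (hu0 : ∀ x ∈ stdSimplex ℝ K, 0 ≤ u x)
    (hδ0 : 0 ≤ δ) (hδ1 : δ < 1) (hw0 : ∀ x ∈ stdSimplex ℝ K, 0 ≤ w x) :
    ∀ x ∈ stdSimplex ℝ K, 0 ≤ stagePayoff M u δ w x := fun x hx =>
  add_nonneg (mul_nonneg (by linarith) (hu0 x hx))
    (mul_nonneg hδ0 (hw0 _ (hM.vecMul_mem_stdSimplex hx)))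

lemma stagePayoff_le (hM : IsStochastic M) (huC : ∀ x ∈ stdSimplex ℝ K, u x ≤ C)
    (hδ0 : 0 ≤ δ) (hδ1 : δ < 1) (hwC : ∀ x ∈ stdSimplex ℝ K, w x ≤ C) :
    ∀ x ∈ stdSimplex ℝ K, stagePayoff M u δ w x ≤ C := fun x hx => by
  have hu := mul_le_mul_of_nonneg_left (huC x hx) (by linarith : 0 ≤ 1 - δ)
  have hw := mul_le_mul_of_nonneg_left (hwC _ (hM.vecMul_mem_stdSimplex hx)) hδ0
  rw [stagePayoff]
  linarith

lemma upperSemicontinuousOn_stagePayoff (hM : IsStochastic M)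
    (husc : UpperSemicontinuousOn u (stdSimplex ℝ K)) (hδ0 : 0 ≤ δ) (hδ1 : δ < 1)
    (hwu : UpperSemicontinuousOn w (stdSimplex ℝ K)) :
    UpperSemicontinuousOn (stagePayoff M u δ w) (stdSimplex ℝ K) :=
  (continuousOn_const.mul_upperSemicontinuousOn (fun _ _ => by linarith) husc).add
    (continuousOn_const.mul_upperSemicontinuousOn (fun _ _ => hδ0)
      (hwu.comp_continuousOn (by fun_prop) fun _ hx => hM.vecMul_mem_stdSimplex hx))

def valueIterate (M : Matrix K K ℝ) (u : (K → ℝ) → ℝ) (δ : ℝ) : ℕ → (K → ℝ) → ℝ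
  | 0 => 0
  | n + 1 => splitSup (stagePayoff M u δ (valueIterate M u δ n))

lemma valueIterate_mem_Icc (hM : IsStochastic M) (hu0 : ∀ x ∈ stdSimplex ℝ K, 0 ≤ u x)
    (huC : ∀ x ∈ stdSimplex ℝ K, u x ≤ C) (hδ0 : 0 ≤ δ) (hδ1 : δ < 1) (n : ℕ) :
    ∀ x ∈ stdSimplex ℝ K, valueIterate M u δ n x ∈ Icc 0 C := by
  induction n with
  | zero => exact fun x hx => ⟨le_rfl, (hu0 x hx).trans (huC x hx)⟩
  | succ n ih =>
    have hg0 := stagePayoff_nonneg hM hu0 hδ0 hδ1 fun x hx => (ih x hx).1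
    have hgC := stagePayoff_le hM huC hδ0 hδ1 fun x hx => (ih x hx).2
    exact fun x hx => ⟨splitSup_nonneg hg0 hgC hx, splitSup_le hg0 hgC hx⟩

lemma upperSemicontinuousOn_valueIterate (hM : IsStochastic M)
    (hu0 : ∀ x ∈ stdSimplex ℝ K, 0 ≤ u x) (huC : ∀ x ∈ stdSimplex ℝ K, u x ≤ C)
    (husc : UpperSemicontinuousOn u (stdSimplex ℝ K)) (hδ0 : 0 ≤ δ) (hδ1 : δ < 1) (n : ℕ) :
    UpperSemicontinuousOn (valueIterate M u δ n) (stdSimplex ℝ K) := by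
  induction n with
  | zero => exact continuousOn_const.upperSemicontinuousOn
  | succ n ih =>
    have hT := valueIterate_mem_Icc hM hu0 huC hδ0 hδ1 n
    exact upperSemicontinuousOn_splitSup
      (stagePayoff_nonneg hM hu0 hδ0 hδ1 fun x hx => (hT x hx).1)
      (stagePayoff_le hM huC hδ0 hδ1 fun x hx => (hT x hx).2)
      (upperSemicontinuousOn_stagePayoff hM husc hδ0 hδ1 ih)

/-- The Bellman operator is a `δ`-contraction. -/
lemma abs_valueIterate_sub_le (hM : IsStochastic M) (hu0 : ∀ x ∈ stdSimplex ℝ K, 0 ≤ u x)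
    (huC : ∀ x ∈ stdSimplex ℝ K, u x ≤ C) (hδ0 : 0 ≤ δ) (hδ1 : δ < 1)
    (hw0 : ∀ x ∈ stdSimplex ℝ K, 0 ≤ w x) (hwC : ∀ x ∈ stdSimplex ℝ K, w x ≤ C)
    (hw : ∀ x ∈ stdSimplex ℝ K, w x = splitSup (stagePayoff M u δ w) x) (n : ℕ) :
    ∀ x ∈ stdSimplex ℝ K, |valueIterate M u δ n x - w x| ≤ δ ^ n * C := by
  induction n with
  | zero =>
    intro x hx
    simpa [valueIterate, abs_of_nonneg (hw0 x hx)] using hwC x hx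
  | succ n ih =>
    intro x hx
    have hT := valueIterate_mem_Icc hM hu0 huC hδ0 hδ1 n
    have hdiff : ∀ y ∈ stdSimplex ℝ K, |stagePayoff M u δ (valueIterate M u δ n) y -
        stagePayoff M u δ w y| ≤ δ * (δ ^ n * C) := fun y hy => by
      rw [stagePayoff, stagePayoff, add_sub_add_left_eq_sub, ← mul_sub, abs_mul,
        abs_of_nonneg hδ0]
      exact mul_le_mul_of_nonneg_left (ih _ (hM.vecMul_mem_stdSimplex hy)) hδ0
    have hTg0 := stagePayoff_nonneg hM hu0 hδ0 hδ1 fun x hx => (hT x hx).1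
    have hTgC := stagePayoff_le hM huC hδ0 hδ1 fun x hx => (hT x hx).2
    have hwg0 := stagePayoff_nonneg hM hu0 hδ0 hδ1 hw0
    have hwgC := stagePayoff_le hM huC hδ0 hδ1 hwC
    have hle := splitSup_le_splitSup_add (c := δ * (δ ^ n * C)) hTg0 hTgC hwg0 hwgC
      (fun y hy => by linarith [(abs_sub_le_iff.1 (hdiff y hy)).1]) hx
    have hge := splitSup_le_splitSup_add (c := δ * (δ ^ n * C)) hwg0 hwgC hTg0 hTgC
      (fun y hy => by linarith [(abs_sub_le_iff.1 (hdiff y hy)).2]) hx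
    rw [valueIterate, hw x hx, abs_sub_le_iff, pow_succ, mul_comm (δ ^ n) δ, mul_assoc]
    constructor <;> linarith

theorem upperSemicontinuousOn_of_bellman (hM : IsStochastic M)
    (hu0 : ∀ x ∈ stdSimplex ℝ K, 0 ≤ u x) (huC : ∀ x ∈ stdSimplex ℝ K, u x ≤ C)
    (husc : UpperSemicontinuousOn u (stdSimplex ℝ K)) (hδ0 : 0 ≤ δ) (hδ1 : δ < 1)
    (hw0 : ∀ x ∈ stdSimplex ℝ K, 0 ≤ w x) (hwC : ∀ x ∈ stdSimplex ℝ K, w x ≤ C)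
    (hw : ∀ x ∈ stdSimplex ℝ K, w x = splitSup (stagePayoff M u δ w) x) :
    UpperSemicontinuousOn w (stdSimplex ℝ K) := by
  refine TendstoUniformlyOn.upperSemicontinuousOn (l := atTop) ?_
    (upperSemicontinuousOn_valueIterate hM hu0 huC husc hδ0 hδ1)
  refine Metric.tendstoUniformlyOn_iff.2 fun ε hε => ?_
  have hlim : Tendsto (fun n => δ ^ n * C) atTop (𝓝 0) := by
    simpa using (tendsto_pow_atTop_nhds_zero_of_lt_one hδ0 hδ1).mul_const C
  filter_upwards [hlim.eventually (eventually_lt_nhds hε)] with n hn x hx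
  rw [dist_comm, Real.dist_eq]
  exact (abs_valueIterate_sub_le hM hu0 huC hδ0 hδ1 hw0 hwC hw n x hx).trans_lt hn

end Bellman

theorem markovian_persuasion_bellman_attained_by_finite_split_general
    {K : Type*} [Fintype K]
    (M : Matrix K K ℝ) (hM : IsStochastic M)
    (u : (K → ℝ) → ℝ) (hu0 : ∀ ξ ∈ stdSimplex ℝ K, 0 ≤ u ξ)
    (husc : UpperSemicontinuousOn u (stdSimplex ℝ K))
    (C : ℝ) (hC : IsLUB (u '' stdSimplex ℝ K) C)
    (v : ℝ → (K → ℝ) → ℝ) (hv : IsValueFamily M u C v) :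
    ∀ δ : ℝ, 0 ≤ δ → δ < 1 → ∀ ξ ∈ stdSimplex ℝ K,
      ∃ (α : K → ℝ) (ξs : K → (K → ℝ)),
        (∀ i, 0 ≤ α i) ∧ (∑ i, α i = 1) ∧
        (∀ i, ξs i ∈ stdSimplex ℝ K) ∧
        (∀ ℓ, (∑ i, α i * ξs i ℓ) = ξ ℓ) ∧
        v δ ξ = ∑ i, α i * ((1 - δ) * u (ξs i) + δ * v δ (Matrix.vecMul (ξs i) M)) := by
  intro δ hδ0 hδ1 ξ hξ
  obtain ⟨hbd, hbell⟩ := hv δ ⟨hδ0, hδ1⟩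
  have hbell : ∀ x ∈ stdSimplex ℝ K, v δ x = splitSup (stagePayoff M u δ (v δ)) x := hbell
  have huC : ∀ x ∈ stdSimplex ℝ K, u x ≤ C := fun x hx => hC.1 ⟨x, hx, rfl⟩
  have hv0 : ∀ x ∈ stdSimplex ℝ K, 0 ≤ v δ x := fun x hx => (hbd x hx).1
  have hvC : ∀ x ∈ stdSimplex ℝ K, v δ x ≤ C := fun x hx => (hbd x hx).2
  have hvusc := upperSemicontinuousOn_of_bellman hM hu0 huC husc hδ0 hδ1 hv0 hvC hbell
  obtain ⟨p, ⟨hw, hbeliefs, hmean⟩, hpv⟩ := exists_finiteSplitValue_eq_splitSup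
    (stagePayoff_nonneg hM hu0 hδ0 hδ1 hv0) (stagePayoff_le hM huC hδ0 hδ1 hvC)
    (upperSemicontinuousOn_stagePayoff hM husc hδ0 hδ1 hvusc) hξ
  exact ⟨p.1, p.2, hw.1, hw.2, hbeliefs, fun ℓ => by simpa using congrFun hmean ℓ,
    (hbell ξ hξ).trans hpv.symm⟩

theorem markovian_persuasion_bellman_attained_by_finite_split
    {K : Type*} [Fintype K] [Nonempty K]
    (M : Matrix K K ℝ) (hM : IsStochastic M)
    (u : (K → ℝ) → ℝ) (hu0 : ∀ ξ ∈ stdSimplex ℝ K, 0 ≤ u ξ)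
    (husc : UpperSemicontinuousOn u (stdSimplex ℝ K))
    (C : ℝ) (hC : IsLUB (u '' stdSimplex ℝ K) C)
    (v : ℝ → (K → ℝ) → ℝ) (hv : IsValueFamily M u C v) :
    ∀ δ : ℝ, 0 ≤ δ → δ < 1 → ∀ ξ ∈ stdSimplex ℝ K,
      ∃ (α : K → ℝ) (ξs : K → (K → ℝ)),
        (∀ i, 0 ≤ α i) ∧ (∑ i, α i = 1) ∧
        (∀ i, ξs i ∈ stdSimplex ℝ K) ∧
        (∀ ℓ, (∑ i, α i * ξs i ℓ) = ξ ℓ) ∧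
        v δ ξ = ∑ i, α i * ((1 - δ) * u (ξs i) + δ * v δ (Matrix.vecMul (ξs i) M)) :=
  markovian_persuasion_bellman_attained_by_finite_split_general M hM u hu0 husc C hC v hv
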